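/- For every natural number n, F_{2n+2} = Σ_{j ∈ ℤ} [ C(2n+2, n-5j) - C(2n+2, n-5j-1) ]. -/

import Mathlib

/-!
Write `S m c = ∑ⱼ C(m, c - 5j)` for the sum of the binomial coefficients of row `m` in a residue
class mod 5. Pascal's rule gives `S (m+1) c = S m c + S m (c-1)`, so the differences
`S m c - S m (c-1)` satisfy a Fibonacci-type recursion in `m`. By induction on `m`, up to the sign
`(-1)^m` they depend only on `(2c - m) mod 5` and are `0`, `±F_m` or `±(F_{m+1} - F_m)`.
For `m = 2n+2` and `c = n` the residue is `3` and the difference is `F_{2n+2}`.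
-/

/-- Binomial coefficient `C(m, j)` with integer lower index, zero when `j < 0`. -/
def icho (m : ℕ) (j : ℤ) : ℤ := if 0 ≤ j then (m.choose j.toNat : ℤ) else 0

lemma icho_eq_zero {m : ℕ} {k : ℤ} (h : k < 0 ∨ (m : ℤ) < k) : icho m k = 0 := by
  unfold icho
  split_ifs with hk
  · have : m < k.toNat := by omega
    simp [Nat.choose_eq_zero_of_lt this]
  · rfl

lemma icho_zero (k : ℤ) : icho 0 k = if k = 0 then 1 else 0 := by
  split_ifs with hk
  · simp [hk, icho]
  · rcases lt_or_gt_of_ne hk with hk | hk <;> exact icho_eq_zero (by omega)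

lemma icho_succ (m : ℕ) (k : ℤ) : icho (m + 1) k = icho m k + icho m (k - 1) := by
  unfold icho
  split_ifs with h₁ h₂ h₂
  · obtain ⟨i, rfl⟩ : ∃ i : ℕ, k = i + 1 := ⟨(k - 1).toNat, by omega⟩
    simp [Nat.choose_succ_succ', add_comm]
  · obtain rfl : k = 0 := by omega
    simp
  · omega
  · simp

lemma finite_support_icho_sub_mul (m : ℕ) {d : ℤ} (hd : d ≠ 0) (c : ℤ) :
    (Function.support fun j : ℤ => icho m (c - d * j)).Finite := by
  have hinj : Function.Injective fun j : ℤ => c - d * j := fun j j' h =>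
    mul_left_cancel₀ hd (by simpa using h)
  refine ((Set.finite_Icc 0 (m : ℤ)).preimage hinj.injOn).subset fun j hj => ?_
  by_contra hout
  simp only [Set.mem_preimage, Set.mem_Icc, not_and_or, not_le] at hout
  exact hj (icho_eq_zero hout)

noncomputable def binomialResidueSum (d : ℤ) (m : ℕ) (c : ℤ) : ℤ := ∑ᶠ j : ℤ, icho m (c - d * j)

lemma binomialResidueSum_zero {d : ℤ} (hd : d ≠ 0) (c : ℤ) :
    binomialResidueSum d 0 c = if d ∣ c then 1 else 0 := by
  unfold binomialResidueSum
  split_ifs with hdvd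
  · obtain ⟨j₀, rfl⟩ := hdvd
    rw [finsum_eq_single _ j₀ fun j hj => ?_]
    · simp [icho_zero]
    · have : d * j₀ - d * j ≠ 0 := by
        rw [← mul_sub]; exact mul_ne_zero hd (sub_ne_zero.mpr hj.symm)
      simp [icho_zero, this]
  · refine finsum_eq_zero_of_forall_eq_zero fun j => ?_
    have : c - d * j ≠ 0 := fun h => hdvd ⟨j, by linarith⟩
    simp [icho_zero, this]

lemma binomialResidueSum_succ {d : ℤ} (hd : d ≠ 0) (m : ℕ) (c : ℤ) :
    binomialResidueSum d (m + 1) c = binomialResidueSum d m c + binomialResidueSum d m (c - 1) := by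
  unfold binomialResidueSum
  rw [← finsum_add_distrib (finite_support_icho_sub_mul m hd c)
    (finite_support_icho_sub_mul m hd (c - 1))]
  refine finsum_congr fun j => ?_
  rw [icho_succ, sub_right_comm]

def fibResidueValue (m : ℕ) (t : ℤ) : ℤ :=
  if t = 0 then (Nat.fib (m + 1) : ℤ) - Nat.fib m
  else if t = 1 then 0
  else if t = 2 then (Nat.fib m : ℤ) - Nat.fib (m + 1)
  else if t = 3 then (Nat.fib m : ℤ)
  else -(Nat.fib m : ℤ)

lemma fibResidueValue_succ (m : ℕ) (u : ℤ) :
    fibResidueValue (m + 1) (u % 5) =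
      -(fibResidueValue m ((u + 1) % 5) + fibResidueValue m ((u + 4) % 5)) := by
  have hfib : (Nat.fib (m + 2) : ℤ) = Nat.fib (m + 1) + Nat.fib m := by
    rw [Nat.fib_add_two]; push_cast; ring
  have hu : u % 5 = 0 ∨ u % 5 = 1 ∨ u % 5 = 2 ∨ u % 5 = 3 ∨ u % 5 = 4 := by omega
  rcases hu with h | h | h | h | h <;>
  · rw [show (u + 1) % 5 = (u % 5 + 1) % 5 by omega, show (u + 4) % 5 = (u % 5 + 4) % 5 by omega, h]
    norm_num [fibResidueValue, hfib]

lemma binomialResidueSum_sub_pred (m : ℕ) (c : ℤ) :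
    binomialResidueSum 5 m c - binomialResidueSum 5 m (c - 1) =
      (-1) ^ m * fibResidueValue m ((2 * c - m) % 5) := by
  induction m generalizing c with
  | zero =>
    simp only [binomialResidueSum_zero (by norm_num : (5 : ℤ) ≠ 0), fibResidueValue]
    norm_num
    split_ifs <;> omega
  | succ m ih =>
    have hpascal := binomialResidueSum_succ (by norm_num : (5 : ℤ) ≠ 0) m
    have hres := fibResidueValue_succ m (2 * c - (m + 1))
    rw [show (2 * c - (m + 1) + 1) % 5 = (2 * c - m) % 5 by omega,
      show (2 * c - (m + 1) + 4) % 5 = (2 * (c - 1) - m) % 5 by omega] at hres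
    rw [hpascal, hpascal, pow_succ]
    push_cast
    rw [hres]
    linear_combination ih c + ih (c - 1)

/-- Identity (4): `F_{2n+2} = Σ_{j ∈ ℤ} [C(2n+2, n-5j) - C(2n+2, n-5j-1)]`. -/
theorem fib_even_binomial_sum (n : ℕ) :
    (Nat.fib (2 * n + 2) : ℤ) =
      ∑ᶠ j : ℤ, (icho (2 * n + 2) ((n : ℤ) - 5 * j) - icho (2 * n + 2) ((n : ℤ) - 5 * j - 1)) := by
  have h5 : (5 : ℤ) ≠ 0 := by norm_num
  have hsum : ∑ᶠ j : ℤ, (icho (2 * n + 2) ((n : ℤ) - 5 * j) - icho (2 * n + 2) ((n : ℤ) - 5 * j - 1))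
      = binomialResidueSum 5 (2 * n + 2) n - binomialResidueSum 5 (2 * n + 2) (n - 1) := by
    rw [binomialResidueSum, binomialResidueSum, ← finsum_sub_distrib
      (finite_support_icho_sub_mul _ h5 _) (finite_support_icho_sub_mul _ h5 _)]
    simp only [sub_right_comm _ (1 : ℤ)]
  have hres : (2 * (n : ℤ) - ((2 * n + 2 : ℕ) : ℤ)) % 5 = 3 := by push_cast; omega
  rw [hsum, binomialResidueSum_sub_pred, hres, Even.neg_one_pow ⟨n + 1, by ring⟩]
  simp [fibResidueValue]
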